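/- Let H be a connected bialgebra, A a commutative algebra split as A = A₋ ⊕ A₊ into subalgebras, and φ: H → A a character. Then both parts φ₋ and φ₊ of the Birkhoff decomposition of φ are algebra morphisms. -/

import Mathlib

open TensorProduct

variable {K : Type*} [Field K]
variable {H : Type*} [Ring H] [Bialgebra K H]
variable {A : Type*} [CommRing A] [Algebra K A]

/-- The convolution product on `Hom(H, A)`. -/
noncomputable def conv (f g : H →ₗ[K] A) : H →ₗ[K] A :=
  (LinearMap.mul' K A) ∘ₗ (TensorProduct.map f g) ∘ₗ (Coalgebra.comul (R := K))

/-- The image `p ⊗ q` of a pair of submodules inside `H ⊗ H`. -/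
noncomputable def tensorSub (p q : Submodule K H) : Submodule K (H ⊗[K] H) :=
  LinearMap.range (TensorProduct.map p.subtype q.subtype)

/-- The Bogoliubov map `φ̄ x = φ x + m ∘ (φm ⊗ φ) (Δ̃ x)`. -/
noncomputable def bogoliubov (φ φm : H →ₗ[K] A) (x : H) : A :=
  φ x + (LinearMap.mul' K A)
    ((TensorProduct.map φm φ)
      (Coalgebra.comul (R := K) x - (1 : H) ⊗ₜ[K] x - x ⊗ₜ[K] (1 : H)))

/-!
Write `φ̄` for the Bogoliubov preparation, so that on `ker ε` we have `φ₋ = -R φ̄` and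
`φ₊ = φ̄ + φ₋ = φ̄ - R φ̄`. If `φ₋` is multiplicative on all pairs of lower filtration degree,
expanding `Δ(xy) = Δx Δy` gives `φ̄(xy) = φ₊(x) φ₊(y) - φ₋(x) φ₋(y)`. A projection onto a
subalgebra along a subalgebra satisfies the Rota–Baxter identity
`R a * R b = R (R a * b + a * R b - a * b)`, which turns `φ₋(xy) = -R φ̄(xy)` into
`φ₋(x) φ₋(y)`. Induction on the filtration degree makes `φ₋` a character, and then
`φ₊ = φ₋ ⋆ φ` is a convolution of characters into a commutative algebra, hence a character.
-/

section RotaBaxter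

variable {S B : Type*} [Semiring S] [Ring B] [Module S B]

def IsRotaBaxter (R : B →ₗ[S] B) : Prop :=
  ∀ a b, R a * R b = R (R a * b + a * R b - a * b)

theorem isRotaBaxter_of_projection {Bm Bp : Submodule S B} (hB : Codisjoint Bm Bp)
    (hBm : ∀ x ∈ Bm, ∀ y ∈ Bm, x * y ∈ Bm) (hBp : ∀ x ∈ Bp, ∀ y ∈ Bp, x * y ∈ Bp)
    {R : B →ₗ[S] B} (hR₁ : ∀ a ∈ Bm, R a = a) (hR₂ : ∀ a ∈ Bp, R a = 0) : IsRotaBaxter R := by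
  intro a b
  obtain ⟨a₁, a₂, ha₁, ha₂, rfl⟩ := Submodule.codisjoint_iff_exists_add_eq.mp hB a
  obtain ⟨b₁, b₂, hb₁, hb₂, rfl⟩ := Submodule.codisjoint_iff_exists_add_eq.mp hB b
  have hRa : R (a₁ + a₂) = a₁ := by rw [map_add, hR₁ a₁ ha₁, hR₂ a₂ ha₂, add_zero]
  have hRb : R (b₁ + b₂) = b₁ := by rw [map_add, hR₁ b₁ hb₁, hR₂ b₂ hb₂, add_zero]
  have hsplit : a₁ * (b₁ + b₂) + (a₁ + a₂) * b₁ - (a₁ + a₂) * (b₁ + b₂) = a₁ * b₁ - a₂ * b₂ := by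
    noncomm_ring
  rw [hRa, hRb, hsplit, map_sub, hR₁ _ (hBm _ ha₁ _ hb₁), hR₂ _ (hBp _ ha₂ _ hb₂), sub_zero]

theorem IsRotaBaxter.neg_apply_sub_mul_sub {R : B →ₗ[S] B} (hR : IsRotaBaxter R) (a b : B) :
    -R ((a - R a) * (b - R b) - R a * R b) = R a * R b := by
  have hexpand : (a - R a) * (b - R b) - R a * R b = -(R a * b + a * R b - a * b) := by
    noncomm_ring
  rw [hexpand, map_neg, neg_neg, hR]

end RotaBaxter

section IsMulOn

variable {R B C : Type*} [CommSemiring R] [Semiring B] [Algebra R B] [Semiring C] [Algebra R C]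

def IsMulOn (f : B →ₗ[R] C) (p q : Submodule R B) : Prop :=
  ∀ a ∈ p, ∀ b ∈ q, f (a * b) = f a * f b

variable {f : B →ₗ[R] C} {p q p' q' : Submodule R B}

theorem IsMulOn.mono (h : IsMulOn f p q) (hp : p' ≤ p) (hq : q' ≤ q) : IsMulOn f p' q' :=
  fun a ha b hb => h a (hp ha) b (hq hb)

theorem IsMulOn.bot_left : IsMulOn f ⊥ q := by
  intro a ha b _
  rw [(Submodule.mem_bot R).mp ha, zero_mul, map_zero, zero_mul]

theorem IsMulOn.bot_right : IsMulOn f p ⊥ := by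
  intro a _ b hb
  rw [(Submodule.mem_bot R).mp hb, mul_zero, map_zero, mul_zero]

theorem IsMulOn.sup_span_one (hf : f 1 = 1) (h : IsMulOn f p q) :
    IsMulOn f (Submodule.span R {1} ⊔ p) (Submodule.span R {1} ⊔ q) := by
  intro a ha b hb
  obtain ⟨_, hr, a, ha', rfl⟩ := Submodule.mem_sup.mp ha
  obtain ⟨_, hs, b, hb', rfl⟩ := Submodule.mem_sup.mp hb
  obtain ⟨r, rfl⟩ := Submodule.mem_span_singleton.mp hr
  obtain ⟨s, rfl⟩ := Submodule.mem_span_singleton.mp hs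
  simp only [add_mul, mul_add, smul_mul_assoc, mul_smul_comm, one_mul,
    mul_one, map_add, map_smul, hf, h a ha' b hb']

end IsMulOn

noncomputable def convTensor (f g : H →ₗ[K] A) : H ⊗[K] H →ₗ[K] A :=
  LinearMap.mul' K A ∘ₗ TensorProduct.map f g

@[simp]
theorem convTensor_tmul (f g : H →ₗ[K] A) (a b : H) : convTensor f g (a ⊗ₜ b) = f a * g b := by
  simp [convTensor]

theorem tensorSub_eq_span (p q : Submodule K H) :
    tensorSub p q = Submodule.span K (Set.image2 (· ⊗ₜ[K] ·) p q) := by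
  rw [tensorSub, TensorProduct.range_map_eq_span_tmul]
  congr 1
  ext t
  simp [Set.image2, eq_comm]

theorem tmul_mem_tensorSub {p q : Submodule K H} {a b : H} (ha : a ∈ p) (hb : b ∈ q) :
    a ⊗ₜ[K] b ∈ tensorSub p q :=
  tensorSub_eq_span p q ▸ Submodule.subset_span (Set.mem_image2_of_mem ha hb)

theorem tensorSub_mono {p q p' q' : Submodule K H} (hp : p ≤ p') (hq : q ≤ q') :
    tensorSub p q ≤ tensorSub p' q' := by
  rw [tensorSub_eq_span, tensorSub_eq_span]
  exact Submodule.span_mono (Set.image2_subset hp hq)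

theorem tensorSub_le_comap_map {p q : Submodule K H} {N : Submodule K (H ⊗[K] H)}
    {f g : H →ₗ[K] H} (h : ∀ a ∈ p, ∀ b ∈ q, f a ⊗ₜ g b ∈ N) :
    tensorSub p q ≤ N.comap (TensorProduct.map f g) := by
  rw [tensorSub_eq_span, Submodule.span_le]
  rintro _ ⟨a, ha, b, hb, rfl⟩
  exact h a ha b hb

theorem convTensor_mul_of_isMulOn {f : H →ₗ[K] A} {g : H →ₐ[K] A} {p q : Submodule K H}
    (h : IsMulOn f p q) {u v : H ⊗[K] H} (hu : u ∈ tensorSub p ⊤) (hv : v ∈ tensorSub q ⊤) :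
    convTensor f g.toLinearMap (u * v) =
      convTensor f g.toLinearMap u * convTensor f g.toLinearMap v := by
  rw [tensorSub_eq_span] at hu hv
  induction hu, hv using Submodule.span_induction₂ with
  | mem_mem u v hu hv =>
    obtain ⟨a, ha, b, -, rfl⟩ := hu
    obtain ⟨c, hc, d, -, rfl⟩ := hv
    rw [Algebra.TensorProduct.tmul_mul_tmul, convTensor_tmul, convTensor_tmul, convTensor_tmul,
      h a ha c hc, AlgHom.coe_toLinearMap, map_mul]
    ring
  | zero_left => simp
  | zero_right => simp
  | add_left _ _ _ _ _ _ h₁ h₂ => simp only [add_mul, map_add, h₁, h₂]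
  | add_right _ _ _ _ _ _ h₁ h₂ => simp only [mul_add, map_add, h₁, h₂]
  | smul_left r _ _ _ _ h => simp only [smul_mul_assoc, map_smul, h]
  | smul_right r _ _ _ _ h => simp only [mul_smul_comm, map_smul, h]

local notation "ε" => Coalgebra.counit (R := K)

variable (K) in
noncomputable def reducedComul (x : H) : H ⊗[K] H :=
  Coalgebra.comul (R := K) x - (1 : H) ⊗ₜ[K] x - x ⊗ₜ[K] (1 : H)

theorem comul_eq_add_reducedComul (x : H) :
    Coalgebra.comul (R := K) x = x ⊗ₜ[K] (1 : H) + ((1 : H) ⊗ₜ[K] x + reducedComul K x) := by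
  rw [reducedComul]
  abel

theorem bogoliubov_apply (φ φm : H →ₗ[K] A) (x : H) :
    bogoliubov φ φm x = φ x + convTensor φm φ (reducedComul K x) :=
  rfl

theorem conv_apply (f g : H →ₗ[K] A) (x : H) :
    conv f g x = convTensor f g (Coalgebra.comul (R := K) x) :=
  rfl

theorem conv_eq_bogoliubov_add {φ : H →ₐ[K] A} {φm : H →ₗ[K] A} (hφm1 : φm 1 = 1) (x : H) :
    conv φm φ.toLinearMap x = bogoliubov φ.toLinearMap φm x + φm x := by
  rw [conv_apply, bogoliubov_apply, comul_eq_add_reducedComul, map_add, map_add, convTensor_tmul,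
    convTensor_tmul, hφm1, AlgHom.coe_toLinearMap, map_one, mul_one, one_mul]
  ring

variable (K) in
noncomputable def augmentationProj : H →ₗ[K] H :=
  LinearMap.id - Algebra.linearMap K H ∘ₗ Coalgebra.counit

theorem augmentationProj_apply (x : H) : augmentationProj K x = x - ε x • (1 : H) := by
  simp [augmentationProj, Algebra.algebraMap_eq_smul_one]

theorem counit_augmentationProj (x : H) : ε (augmentationProj K x) = 0 := by
  simp [augmentationProj_apply, Bialgebra.counit_one]

theorem augmentationProj_smul_one (c : K) : augmentationProj K (c • (1 : H)) = 0 := by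
  simp [augmentationProj_apply, Bialgebra.counit_one]

theorem map_augmentationProj_comul {x : H} (hx : ε x = 0) :
    TensorProduct.map (augmentationProj K) (augmentationProj K) (Coalgebra.comul (R := K) x) =
      reducedComul K x := by
  have hl : (augmentationProj K).lTensor H (Coalgebra.comul (R := K) x) =
      Coalgebra.comul (R := K) x - x ⊗ₜ[K] (1 : H) := by
    simp [augmentationProj, LinearMap.lTensor_sub, LinearMap.lTensor_comp_apply,
      Coalgebra.lTensor_counit_comul]
  rw [← LinearMap.rTensor_comp_lTensor, LinearMap.comp_apply, hl, map_sub]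
  simp [augmentationProj, LinearMap.rTensor_sub, LinearMap.rTensor_comp_apply,
    Coalgebra.rTensor_counit_comul, hx, reducedComul]

theorem isCompl_span_one_ker_counit :
    IsCompl (Submodule.span K {(1 : H)}) (LinearMap.ker (ε : H →ₗ[K] K)) := by
  refine ⟨Submodule.disjoint_def.mpr fun x hx hεx => ?_,
    Submodule.codisjoint_iff_exists_add_eq.mpr fun x => ⟨ε x • 1, augmentationProj K x,
      Submodule.smul_mem _ _ (Submodule.mem_span_singleton_self 1), counit_augmentationProj x,
      by rw [augmentationProj_apply]; abel⟩⟩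
  obtain ⟨c, rfl⟩ := Submodule.mem_span_singleton.mp hx
  simp_all [Bialgebra.counit_one]

theorem reducedComul_mem_tensorSub {F : ℕ → Submodule K H} (hmono : Monotone F)
    (hcomul : ∀ n, ∀ x ∈ F n, Coalgebra.comul (R := K) x ∈
      ∑ i ∈ Finset.range (n + 1), tensorSub (F i) (F (n - i)))
    (hconn : F 0 = Submodule.span K {(1 : H)}) {n : ℕ} {x : H} (hx : x ∈ F n) (hεx : ε x = 0) :
    reducedComul K x ∈
      tensorSub (F (n - 1) ⊓ LinearMap.ker ε) (F (n - 1) ⊓ LinearMap.ker ε) := by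
  rw [← map_augmentationProj_comul hεx]
  set π : H →ₗ[K] H := augmentationProj K
  have hπ_mem : ∀ {j}, ∀ a ∈ F j, π a ∈ F j ⊓ LinearMap.ker ε := fun {j} a ha =>
    ⟨(augmentationProj_apply (K := K) a) ▸ sub_mem ha (Submodule.smul_mem _ _
      (hmono (Nat.zero_le j) (hconn ▸ Submodule.mem_span_singleton_self 1))),
     counit_augmentationProj a⟩
  have hπ_zero : ∀ a ∈ F 0, π a = 0 := by
    intro a ha
    obtain ⟨c, rfl⟩ := Submodule.mem_span_singleton.mp (hconn ▸ ha)
    exact augmentationProj_smul_one c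
  refine Finset.sum_induction _ (· ≤ Submodule.comap (TensorProduct.map π π)
      (tensorSub (F (n - 1) ⊓ LinearMap.ker ε) (F (n - 1) ⊓ LinearMap.ker ε)))
    (fun _ _ h₁ h₂ => by rw [Submodule.add_eq_sup]; exact sup_le h₁ h₂) bot_le
    (fun i hi => tensorSub_le_comap_map fun a ha b hb => ?_) (hcomul n x hx)
  have hi := Finset.mem_range.mp hi
  rcases Nat.eq_zero_or_pos i with rfl | hi₀
  · rw [hπ_zero a ha, TensorProduct.zero_tmul]
    exact zero_mem _
  rcases Nat.eq_zero_or_pos (n - i) with hni | hni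
  · rw [hπ_zero b (hni ▸ hb), TensorProduct.tmul_zero]
    exact zero_mem _
  exact tmul_mem_tensorSub (inf_le_inf_right _ (hmono (by omega)) (hπ_mem a ha))
    (inf_le_inf_right _ (hmono (by omega)) (hπ_mem b hb))

theorem bogoliubov_mul {φ : H →ₐ[K] A} {φm : H →ₗ[K] A} (hφm1 : φm 1 = 1)
    {P Q X Y : Submodule K H} (hPX : P ≤ X) (hXQ : IsMulOn φm X Q) (hPY : IsMulOn φm P Y)
    {x y : H} (hx : x ∈ X) (hy : y ∈ Y) (hΔx : reducedComul K x ∈ tensorSub P ⊤)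
    (hΔy : reducedComul K y ∈ tensorSub Q ⊤) :
    bogoliubov φ.toLinearMap φm (x * y) =
      conv φm φ.toLinearMap x * conv φm φ.toLinearMap y - φm x * φm y := by
  have hsplit : ∀ {p : Submodule K H} {z : H}, reducedComul K z ∈ tensorSub p ⊤ →
      ∃ u ∈ tensorSub (Submodule.span K {1} ⊔ p) ⊤, Coalgebra.comul (R := K) z = z ⊗ₜ 1 + u :=
    fun h => ⟨_, add_mem (tmul_mem_tensorSub
      (Submodule.mem_sup_left (Submodule.mem_span_singleton_self 1)) trivial)
      (tensorSub_mono le_sup_right le_rfl h), comul_eq_add_reducedComul _⟩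
  have hlead : ∀ {p : Submodule K H} {z : H}, z ∈ p →
      z ⊗ₜ[K] (1 : H) ∈ tensorSub (Submodule.span K {1} ⊔ p) ⊤ :=
    fun h => tmul_mem_tensorSub (Submodule.mem_sup_right h) trivial
  have hL : ∀ z : H, convTensor φm φ.toLinearMap (z ⊗ₜ[K] 1) = φm z := fun z => by simp
  -- With `Δx = x ⊗ 1 + u`, every product in `Δx * Δy` other than `(x ⊗ 1) * (y ⊗ 1)` has
  -- first legs on which `φm` is already multiplicative.
  obtain ⟨u, hu, hxu⟩ := hsplit hΔx
  obtain ⟨v, hv, hyv⟩ := hsplit hΔy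
  have hconv_mul : conv φm φ.toLinearMap (x * y) =
      conv φm φ.toLinearMap x * conv φm φ.toLinearMap y - φm x * φm y + φm (x * y) := by
    simp only [conv_apply, Bialgebra.comul_mul, hxu, hyv, add_mul, mul_add, map_add,
      Algebra.TensorProduct.tmul_mul_tmul, mul_one]
    rw [convTensor_mul_of_isMulOn (hXQ.sup_span_one hφm1) (hlead hx) hv,
      convTensor_mul_of_isMulOn (hPY.sup_span_one hφm1) hu (hlead hy),
      convTensor_mul_of_isMulOn ((hXQ.mono hPX le_rfl).sup_span_one hφm1) hu hv, hL, hL, hL]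
    ring
  rw [conv_eq_bogoliubov_add hφm1] at hconv_mul
  exact add_right_cancel hconv_mul

theorem IsMulOn.of_bogoliubov_recursion {φ : H →ₐ[K] A} {φm : H →ₗ[K] A} {R : A →ₗ[K] A}
    (hR : IsRotaBaxter R) (hφm1 : φm 1 = 1)
    (hφm : ∀ x : H, ε x = 0 → φm x = -R (bogoliubov φ.toLinearMap φm x))
    {P Q X Y : Submodule K H} (hX : X ≤ LinearMap.ker ε) (hY : Y ≤ LinearMap.ker ε)
    (hPX : P ≤ X) (hXQ : IsMulOn φm X Q) (hPY : IsMulOn φm P Y)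
    (hΔX : ∀ x ∈ X, reducedComul K x ∈ tensorSub P ⊤)
    (hΔY : ∀ y ∈ Y, reducedComul K y ∈ tensorSub Q ⊤) :
    IsMulOn φm X Y := by
  intro x hx y hy
  have hεx : ε x = 0 := hX hx
  have hεy : ε y = 0 := hY hy
  have hconv : ∀ z, ε z = 0 → conv φm φ.toLinearMap z =
      bogoliubov φ.toLinearMap φm z - R (bogoliubov φ.toLinearMap φm z) := fun z hz => by
    rw [conv_eq_bogoliubov_add hφm1, hφm z hz, sub_eq_add_neg]
  calc φm (x * y) = -R (bogoliubov φ.toLinearMap φm (x * y)) :=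
        hφm _ (by rw [Bialgebra.counit_mul, hεx, zero_mul])
    _ = R (bogoliubov φ.toLinearMap φm x) * R (bogoliubov φ.toLinearMap φm y) := by
        rw [bogoliubov_mul hφm1 hPX hXQ hPY hx hy (hΔX x hx) (hΔY y hy), hconv x hεx, hconv y hεy,
          hφm x hεx, hφm y hεy, neg_mul_neg, hR.neg_apply_sub_mul_sub]
    _ = φm x * φm y := by rw [hφm x hεx, hφm y hεy, neg_mul_neg]

theorem isMulOn_filtration {F : ℕ → Submodule K H} (hmono : Monotone F)
    (hcomul : ∀ n, ∀ x ∈ F n, Coalgebra.comul (R := K) x ∈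
      ∑ i ∈ Finset.range (n + 1), tensorSub (F i) (F (n - i)))
    (hconn : F 0 = Submodule.span K {(1 : H)}) {φ : H →ₐ[K] A} {φm : H →ₗ[K] A}
    {R : A →ₗ[K] A} (hR : IsRotaBaxter R) (hφm1 : φm 1 = 1)
    (hφm : ∀ x : H, ε x = 0 → φm x = -R (bogoliubov φ.toLinearMap φm x)) (n m : ℕ) :
    IsMulOn φm (F n ⊓ LinearMap.ker ε) (F m ⊓ LinearMap.ker ε) := by
  have hbot : F 0 ⊓ LinearMap.ker ε = ⊥ := hconn ▸ isCompl_span_one_ker_counit.inf_eq_bot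
  have hΔ : ∀ k, ∀ x ∈ F (k + 1) ⊓ LinearMap.ker ε,
      reducedComul K x ∈ tensorSub (F k ⊓ LinearMap.ker ε) ⊤ := fun k x hx => by
    have h := reducedComul_mem_tensorSub hmono hcomul hconn hx.1 hx.2
    rw [Nat.add_sub_cancel] at h
    exact tensorSub_mono le_rfl le_top h
  induction hN : n + m using Nat.strong_induction_on generalizing n m with
  | _ N ih =>
    rcases n with _ | n
    · exact hbot ▸ IsMulOn.bot_left
    rcases m with _ | m
    · exact hbot ▸ IsMulOn.bot_right
    exact .of_bogoliubov_recursion hR hφm1 hφm inf_le_right inf_le_right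
      (inf_le_inf_right _ (hmono n.le_succ)) (ih _ (by omega) _ _ rfl) (ih _ (by omega) _ _ rfl)
      (hΔ n) (hΔ m)

theorem birkhoff_of_character_is_character_general
    (F : ℕ → Submodule K H)
    (hmono : Monotone F)
    (hcover : ∀ x : H, ∃ n, x ∈ F n)
    (hcomul : ∀ n, ∀ x ∈ F n,
      Coalgebra.comul (R := K) x ∈
        ∑ i ∈ Finset.range (n + 1), tensorSub (F i) (F (n - i)))
    (hconn : F 0 = Submodule.span K {(1 : H)})
    (Am Ap : Submodule K A) (hAc : IsCompl Am Ap)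
    (hAm : ∀ x ∈ Am, ∀ y ∈ Am, x * y ∈ Am)
    (hAp : ∀ x ∈ Ap, ∀ y ∈ Ap, x * y ∈ Ap)
    (R : A →ₗ[K] A) (hR₁ : ∀ a ∈ Am, R a = a) (hR₂ : ∀ a ∈ Ap, R a = 0)
    (φ : H →ₐ[K] A)
    (φm : H →ₗ[K] A) (hφm1 : φm 1 = 1)
    (hφm : ∀ x : H, Coalgebra.counit (R := K) x = 0 →
      φm x = -R (bogoliubov φ.toLinearMap φm x)) :
    (∀ x y : H, φm (x * y) = φm x * φm y) ∧
    ((conv φm φ.toLinearMap) 1 = 1 ∧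
      ∀ x y : H, (conv φm φ.toLinearMap) (x * y) =
        (conv φm φ.toLinearMap) x * (conv φm φ.toLinearMap) y) := by
  have hR := isRotaBaxter_of_projection hAc.codisjoint hAm hAp hR₁ hR₂
  have hker : IsMulOn φm (LinearMap.ker ε) (LinearMap.ker ε) := fun x hx y hy => by
    obtain ⟨n, hxn⟩ := hcover x
    obtain ⟨m, hym⟩ := hcover y
    exact isMulOn_filtration hmono hcomul hconn hR hφm1 hφm n m x ⟨hxn, hx⟩ y ⟨hym, hy⟩
  have hmul : ∀ x y : H, φm (x * y) = φm x * φm y := fun x y => by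
    have htop := isCompl_span_one_ker_counit (K := K) (H := H) |>.sup_eq_top
    exact hker.sup_span_one hφm1 x (htop ▸ trivial) y (htop ▸ trivial)
  let ψ : H →ₐ[K] A := .ofLinearMap φm hφm1 hmul
  have hconv : conv φm φ.toLinearMap =
      (WithConv.toConv ψ * WithConv.toConv φ).ofConv.toLinearMap :=
    rfl
  exact ⟨hmul, by simp [hconv], by simp [hconv]⟩

/-- for a connected bialgebra `H`, a commutative algebra `A` split
into subalgebras `A = A₋ ⊕ A₊` with projection `R` onto `A₋`, and a character
`φ : H → A`, both parts `φ₋` (defined by the renormalization recursion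
`φ₋ x = -R (φ̄ x)` on `ker ε`) and `φ₊ = φ₋ ⋆ φ` of the Birkhoff decomposition
of `φ` are algebra morphisms. -/
theorem birkhoff_of_character_is_character
    (F : ℕ → Submodule K H)
    (hmono : Monotone F)
    (hcover : ∀ x : H, ∃ n, x ∈ F n)
    (hcomul : ∀ n, ∀ x ∈ F n,
      Coalgebra.comul (R := K) x ∈
        ∑ i ∈ Finset.range (n + 1), tensorSub (F i) (F (n - i)))
    (hmul : ∀ n m : ℕ, ∀ x ∈ F n, ∀ y ∈ F m, x * y ∈ F (n + m))
    (hconn : F 0 = Submodule.span K {(1 : H)})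
    (Am Ap : Submodule K A) (hAc : IsCompl Am Ap)
    (hAm : ∀ x ∈ Am, ∀ y ∈ Am, x * y ∈ Am)
    (hAp : ∀ x ∈ Ap, ∀ y ∈ Ap, x * y ∈ Ap)
    (R : A →ₗ[K] A) (hR₁ : ∀ a ∈ Am, R a = a) (hR₂ : ∀ a ∈ Ap, R a = 0)
    (φ : H →ₐ[K] A)
    (φm : H →ₗ[K] A) (hφm1 : φm 1 = 1)
    (hφm : ∀ x : H, Coalgebra.counit (R := K) x = 0 →
      φm x = -R (bogoliubov φ.toLinearMap φm x)) :
    (∀ x y : H, φm (x * y) = φm x * φm y) ∧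
    ((conv φm φ.toLinearMap) 1 = 1 ∧
      ∀ x y : H, (conv φm φ.toLinearMap) (x * y) =
        (conv φm φ.toLinearMap) x * (conv φm φ.toLinearMap) y) :=
  birkhoff_of_character_is_character_general F hmono hcover hcomul hconn Am Ap hAc hAm hAp R hR₁ hR₂
    φ φm hφm1 hφm
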